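/- Let μ be a Radon measure on ℝ and x ∈ supp μ. Then the map t ↦ μ_{x,t} from (0,∞) to the space of Borel probability measures on [-1,1] with the weak-* topology is left continuous: for every t₀ > 0, μ_{x,t} → μ_{x,t₀} as t → t₀⁻. -/

import Mathlib

open MeasureTheory Filter Topology Set
open scoped ENNReal NNReal

noncomputable section

/-- `I = [-1,1]`. -/
abbrev I01 : Set ℝ := Set.Icc (-1 : ℝ) 1

/-- The window `x + γ·I_t = [x - γe^{-t}, x + γe^{-t}]`. -/
def window (x γ t : ℝ) : Set ℝ := Set.Icc (x - γ * Real.exp (-t)) (x + γ * Real.exp (-t))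

/-- The scenery `μ_{x,t}` as a measure on `I = [-1,1]`:
`A ↦ μ(x + e^{-t}A) / μ(x + I_t)`. -/
def sceneryMeasure (μ : Measure ℝ) (x t : ℝ) : Measure I01 :=
  (μ (window x 1 t))⁻¹ • Measure.comap (fun a : I01 => x + Real.exp (-t) * (a : ℝ)) μ

/-- The scenery `μ_{x,t}` as a Borel probability measure on `I = [-1,1]`
(with an irrelevant junk value if the normalisation fails, which does not
happen when `μ` is Radon and `x ∈ supp μ`, `t ≥ 0`). -/
def scenery (μ : Measure ℝ) (x t : ℝ) : ProbabilityMeasure I01 := by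
  classical
  exact if h : IsProbabilityMeasure (sceneryMeasure μ x t) then ⟨_, h⟩
  else ⟨Measure.dirac ⟨0, by norm_num⟩, inferInstance⟩

/-- `x` belongs to the topological support of `μ`. -/
def MemSupp (μ : Measure ℝ) (x : ℝ) : Prop := ∀ ε > 0, 0 < μ (Set.Ioo (x - ε) (x + ε))

/-- `f` is an orientation-preserving `C¹` diffeomorphism of `ℝ`. -/
def IsOPDiffeo (f : ℝ → ℝ) : Prop :=
  ContDiff ℝ 1 f ∧ Function.Bijective f ∧ ∀ y : ℝ, 0 < deriv f y

/-- The families of distributions `⟨μ⟩_{x,T}` and `⟨ν⟩_{y,T}` are asymptotic: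
`⟨μ⟩_{x,T} - ⟨ν⟩_{y,T} → 0` weak-*, i.e. for every continuous `g : M^□ → ℝ`,
`(1/T) ∫_0^T (g(μ_{x,t}) - g(ν_{y,t})) dt → 0` as `T → ∞`. -/
def DistAsymptotic (μ : Measure ℝ) (x : ℝ) (ν : Measure ℝ) (y : ℝ) : Prop :=
  ∀ g : C(ProbabilityMeasure I01, ℝ),
    Tendsto (fun T : ℝ => (1 / T) * ∫ t in Set.Ioc (0 : ℝ) T,
      (g (scenery μ x t) - g (scenery ν y t))) atTop (𝓝 0)

/-- Condition (TC) at `x`: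
`lim_{K→∞} limsup_{γ→1⁺} limsup_{T→∞} (1/T)·λ({t ∈ [0,T] : μ(x+γI_t)/μ(x+I_t) ≥ K}) = 0`. -/
def CondTC (μ : Measure ℝ) (x : ℝ) : Prop :=
  Tendsto (fun K : ℝ =>
      limsup (fun γ : ℝ =>
          limsup (fun T : ℝ =>
              (1 / T) * (volume {t : ℝ | t ∈ Set.Icc (0 : ℝ) T ∧
                ENNReal.ofReal K ≤ μ (window x γ t) / μ (window x 1 t)}).toReal)
            atTop)
        (𝓝[>] (1 : ℝ)))
    atTop (𝓝 0)

/-!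
Write `W_t = x + I_t` and extend `φ` to `ℝ` by constants. The substitution `y = x + e^{-t} a` gives
`∫ φ dμ_{x,t} = μ(W_t)⁻¹ ∫_{W_t} φ(e^t (y - x)) dμ(y)`. As `t ↑ t₀` the closed intervals `W_t`
decrease to `W_{t₀}`, so `1_{W_t} → 1_{W_{t₀}}` pointwise, and dominated convergence on the compact
`W_{t₀ - 1}` gives convergence of the integral and of the mass `μ(W_t)`; the latter is positive
because `x ∈ supp μ`. (As `t ↓ t₀` the windows only increase to the open interval, so continuity
is one-sided.)
-/

lemma range_affine_Icc (x : ℝ) {c : ℝ} (hc : 0 < c) :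
    Set.range (fun a : I01 => x + c * (a : ℝ)) = Set.Icc (x - c) (x + c) := by
  rw [Set.range_comp' (fun y => x + c * y) Subtype.val, Subtype.range_coe]
  simp_rw [add_comm x]
  rw [image_affine_Icc' hc]
  ring_nf

lemma measurableEmbedding_affine (x : ℝ) {c : ℝ} (hc : 0 < c) :
    MeasurableEmbedding fun a : I01 => x + c * (a : ℝ) :=
  (Continuous.isClosedEmbedding (by fun_prop) fun a b h =>
    Subtype.ext (mul_left_cancel₀ hc.ne' (add_left_cancel h))).measurableEmbedding

lemma mem_window_iff {x γ t y : ℝ} : y ∈ window x γ t ↔ |y - x| ≤ γ * Real.exp (-t) := by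
  rw [window, Set.mem_Icc, abs_sub_le_iff]
  constructor <;> rintro ⟨h₁, h₂⟩ <;> constructor <;> linarith

lemma measurableSet_window (x γ t : ℝ) : MeasurableSet (window x γ t) := measurableSet_Icc

lemma window_antitone (x : ℝ) {γ : ℝ} (hγ : 0 ≤ γ) : Antitone (window x γ) :=
  fun s t hst y hy => by
    rw [mem_window_iff] at hy ⊢
    exact hy.trans (by gcongr)

lemma measure_window_lt_top (μ : Measure ℝ) [IsLocallyFiniteMeasure μ] (x γ t : ℝ) :
    μ (window x γ t) < ∞ :=
  isCompact_Icc.measure_lt_top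

lemma MemSupp.measure_window_pos {μ : Measure ℝ} {x : ℝ} (hx : MemSupp μ x) {γ : ℝ} (hγ : 0 < γ)
    (t : ℝ) : 0 < μ (window x γ t) :=
  (hx _ (by positivity)).trans_le (measure_mono Set.Ioo_subset_Icc_self)

lemma measureReal_window_pos {μ : Measure ℝ} [IsLocallyFiniteMeasure μ] {x : ℝ} (hx : MemSupp μ x)
    {γ : ℝ} (hγ : 0 < γ) (t : ℝ) : 0 < μ.real (window x γ t) :=
  ENNReal.toReal_pos (hx.measure_window_pos hγ t).ne' (measure_window_lt_top μ x γ t).ne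

lemma sceneryMeasure_univ (μ : Measure ℝ) (x t : ℝ) :
    sceneryMeasure μ x t Set.univ = (μ (window x 1 t))⁻¹ * μ (window x 1 t) := by
  rw [sceneryMeasure, Measure.smul_apply, smul_eq_mul,
    (measurableEmbedding_affine x (Real.exp_pos (-t))).comap_apply, Set.image_univ,
    range_affine_Icc x (Real.exp_pos (-t)), window, one_mul]

lemma scenery_eq_sceneryMeasure {μ : Measure ℝ} [IsLocallyFiniteMeasure μ] {x : ℝ}
    (hx : MemSupp μ x) (t : ℝ) : (scenery μ x t : Measure I01) = sceneryMeasure μ x t := by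
  have : IsProbabilityMeasure (sceneryMeasure μ x t) := ⟨by
    rw [sceneryMeasure_univ, ENNReal.inv_mul_cancel (hx.measure_window_pos one_pos t).ne'
      (measure_window_lt_top μ x 1 t).ne]⟩
  simp [scenery, this]

lemma integral_sceneryMeasure (μ : Measure ℝ) (φ : C(I01, ℝ)) (x t : ℝ) :
    ∫ a, φ a ∂sceneryMeasure μ x t = (μ.real (window x 1 t))⁻¹ *
      ∫ y in window x 1 t, Set.IccExtend (neg_le_self zero_le_one) φ (Real.exp t * (y - x)) ∂μ := by
  have hemb := measurableEmbedding_affine x (Real.exp_pos (-t))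
  have hφ (a : I01) :
      φ a = Set.IccExtend (neg_le_self zero_le_one) φ (Real.exp t * (x + Real.exp (-t) * a - x)) := by
    rw [add_sub_cancel_left, ← mul_assoc, ← Real.exp_add, add_neg_cancel, Real.exp_zero, one_mul,
      Set.IccExtend_val]
  rw [sceneryMeasure, integral_smul_measure, ENNReal.toReal_inv, smul_eq_mul, measureReal_def]
  congr 1
  simp_rw [hφ]
  rw [← hemb.integral_map (g := fun y => Set.IccExtend _ φ (Real.exp t * (y - x))), hemb.map_comap,
    range_affine_Icc x (Real.exp_pos (-t)), window, one_mul]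

lemma eventually_mem_window_iff_nhdsLT (x : ℝ) {γ : ℝ} (hγ : 0 ≤ γ) (t₀ y : ℝ) :
    ∀ᶠ t in 𝓝[<] t₀, (y ∈ window x γ t ↔ y ∈ window x γ t₀) := by
  by_cases hy : y ∈ window x γ t₀
  · filter_upwards [self_mem_nhdsWithin] with t ht
    exact iff_of_true (window_antitone x hγ ht.le hy) hy
  · rw [mem_window_iff, not_le] at hy
    have hcont : Continuous fun t => γ * Real.exp (-t) := by fun_prop
    filter_upwards [nhdsWithin_le_nhds (hcont.continuousAt.eventually_lt continuousAt_const hy)]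
      with t ht
    simp only [mem_window_iff, not_le.2 ht, not_le.2 hy]

lemma tendsto_setIntegral_window_nhdsLT {E : Type*} [NormedAddCommGroup E] [NormedSpace ℝ E]
    (μ : Measure ℝ) [IsLocallyFiniteMeasure μ] (x : ℝ) {γ : ℝ} (hγ : 0 ≤ γ) (t₀ : ℝ)
    {g : ℝ → ℝ → E} (hg : Continuous (Function.uncurry g)) {C : ℝ} (hC : ∀ t y, ‖g t y‖ ≤ C) :
    Tendsto (fun t => ∫ y in window x γ t, g t y ∂μ) (𝓝[<] t₀)
      (𝓝 (∫ y in window x γ t₀, g t₀ y ∂μ)) := by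
  simp_rw [← integral_indicator (measurableSet_window x γ _)]
  refine tendsto_integral_filter_of_dominated_convergence
    ((window x γ (t₀ - 1)).indicator fun _ => C) ?_ ?_ ?_ ?_
  · refine .of_forall fun t => (Continuous.aestronglyMeasurable ?_).indicator
      (measurableSet_window x γ t)
    exact hg.comp (Continuous.prodMk_right t)
  · filter_upwards [Ioo_mem_nhdsLT (sub_one_lt t₀)] with t ht
    refine .of_forall fun y => ?_
    rw [norm_indicator_eq_indicator_norm]
    calc (window x γ t).indicator (fun y => ‖g t y‖) y
        ≤ (window x γ t).indicator (fun _ => C) y := Set.indicator_le_indicator (hC t y)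
      _ ≤ (window x γ (t₀ - 1)).indicator (fun _ => C) y :=
        Set.indicator_le_indicator_of_subset (window_antitone x hγ ht.1.le)
          (fun _ => (norm_nonneg _).trans (hC t y)) y
  · exact (integrable_indicator_iff (measurableSet_window x γ _)).2
      (integrableOn_const (measure_window_lt_top μ x γ _).ne)
  · refine .of_forall fun y => ?_
    have hgy : Tendsto (fun t => g t y) (𝓝[<] t₀) (𝓝 (g t₀ y)) :=
      (hg.comp (Continuous.prodMk_left y)).continuousAt.tendsto.mono_left nhdsWithin_le_nhds
    have hwindow := eventually_mem_window_iff_nhdsLT x hγ t₀ y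
    by_cases hy : y ∈ window x γ t₀
    · rw [Set.indicator_of_mem hy]
      refine hgy.congr' ?_
      filter_upwards [hwindow] with t ht
      rw [Set.indicator_of_mem (ht.2 hy)]
    · rw [Set.indicator_of_notMem hy]
      refine tendsto_const_nhds.congr' ?_
      filter_upwards [hwindow] with t ht
      rw [Set.indicator_of_notMem (mt ht.1 hy)]

theorem scenery_left_continuous_general (μ : Measure ℝ) [IsLocallyFiniteMeasure μ]
    (x : ℝ) (hx : MemSupp μ x) (t₀ : ℝ) (φ : C(I01, ℝ)) :
    Tendsto (fun t : ℝ => ∫ a, φ a ∂(scenery μ x t : Measure I01))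
      (𝓝[<] t₀) (𝓝 (∫ a, φ a ∂(scenery μ x t₀ : Measure I01))) := by
  simp_rw [scenery_eq_sceneryMeasure hx, integral_sceneryMeasure]
  have hmass : Tendsto (fun t => μ.real (window x 1 t)) (𝓝[<] t₀)
      (𝓝 (μ.real (window x 1 t₀))) := by
    simpa using tendsto_setIntegral_window_nhdsLT μ x zero_le_one t₀
      (g := fun _ _ => (1 : ℝ)) continuous_const fun _ _ => norm_one.le
  have hφ := tendsto_setIntegral_window_nhdsLT μ x zero_le_one t₀
    (g := fun t y => Set.IccExtend (neg_le_self zero_le_one) φ (Real.exp t * (y - x)))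
    (by fun_prop) fun _ _ => φ.norm_coe_le_norm _
  exact (hmass.inv₀ (measureReal_window_pos hx one_pos t₀).ne').mul hφ

/-- The map `t ↦ μ_{x,t}` is left continuous on `(0,∞)` in the weak-* topology. -/
theorem scenery_left_continuous (μ : Measure ℝ) [IsLocallyFiniteMeasure μ]
    (x : ℝ) (hx : MemSupp μ x) (t₀ : ℝ) (ht₀ : 0 < t₀) (φ : C(I01, ℝ)) :
    Tendsto (fun t : ℝ => ∫ a, φ a ∂(scenery μ x t : Measure I01))
      (𝓝[<] t₀) (𝓝 (∫ a, φ a ∂(scenery μ x t₀ : Measure I01))) :=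
  scenery_left_continuous_general μ x hx t₀ φ
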